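/- Let G be a group containing elements a, b of infinite order with b⁻¹ab = a⁻¹, and suppose b lies in every finite-index subgroup of G. Then every finite-index subgroup of G contains a subgroup isomorphic to the Klein-bottle group BS(1,−1). -/

import Mathlib

/-- Relators of the Baumslag–Solitar group BS(n,m) = ⟨c, d ∣ d⁻¹cⁿd = cᵐ⟩,
with generator 0 ↦ c and 1 ↦ d. -/
def bsRels (n m : ℤ) : Set (FreeGroup (Fin 2)) :=
  {(FreeGroup.of 1)⁻¹ * (FreeGroup.of 0) ^ n * (FreeGroup.of 1) * (FreeGroup.of 0) ^ (-m)}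

/-- The Baumslag–Solitar group BS(n,m). -/
abbrev BS (n m : ℤ) : Type := PresentedGroup (bsRels n m)

/-!
A finite-index subgroup `K` contains some power `x = aⁿ` (`n > 0`) and, by hypothesis, `b`.
Since `b` inverts `a` by conjugation it also inverts `x`, so `c ↦ x`, `d ↦ b` defines a
homomorphism `BS(1,-1) → K`. Every element of `BS(1,-1)` has the form `cⁱdʲ`, and if
`xⁱbʲ = 1` then `bʲ = x⁻ⁱ` commutes with `b` while `b` inverts it, so `x²ⁱ = 1`; as `x` and
`b` have infinite order, `i = j = 0`. Hence the homomorphism is injective.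
-/

theorem inv_mul_zpow_mul_eq_zpow_neg {H : Type*} [Group H] {u v : H} (h : v⁻¹ * u * v = u⁻¹)
    (k : ℤ) : v⁻¹ * u ^ k * v = u ^ (-k) := by
  have := conj_zpow (a := v⁻¹) (b := u) (i := k)
  rw [inv_inv] at this
  rw [← this, h, inv_zpow']

namespace BS

variable {n m : ℤ}

def c : BS n m := PresentedGroup.of 0

def d : BS n m := PresentedGroup.of 1

theorem d_inv_mul_c_zpow_mul_d : (d⁻¹ * c ^ n * d : BS n m) = c ^ m := by
  have := PresentedGroup.one_of_mem (rels := bsRels n m) (Set.mem_singleton _)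
  simpa [c, d, PresentedGroup.of, mul_inv_eq_one] using this

theorem closure_c_d : Subgroup.closure {c, d} = (⊤ : Subgroup (BS n m)) := by
  rw [← PresentedGroup.closure_range_of]
  congr 1
  ext
  simp [Fin.exists_fin_two, c, d, eq_comm]

section lift

variable {H : Type*} [Group H] {u v : H}

def lift (h : v⁻¹ * u ^ n * v = u ^ m) : BS n m →* H :=
  PresentedGroup.toGroup (f := ![u, v]) (by rintro r rfl; simp [h])

@[simp]
theorem lift_c (h : v⁻¹ * u ^ n * v = u ^ m) : lift h c = u :=
  PresentedGroup.toGroup.of _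

@[simp]
theorem lift_d (h : v⁻¹ * u ^ n * v = u ^ m) : lift h d = v :=
  PresentedGroup.toGroup.of _

theorem range_lift (h : v⁻¹ * u ^ n * v = u ^ m) :
    (lift h).range = Subgroup.closure {u, v} := by
  rw [MonoidHom.range_eq_map, ← closure_c_d, MonoidHom.map_closure, Set.image_pair, lift_c,
    lift_d]

end lift

theorem d_inv_mul_c_mul_d : (d⁻¹ * c * d : BS 1 (-1)) = c⁻¹ := by
  simpa using d_inv_mul_c_zpow_mul_d (n := 1) (m := -1)

theorem exists_eq_c_zpow_mul_d_zpow (g : BS 1 (-1)) : ∃ i j : ℤ, g = c ^ i * d ^ j := by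
  have hg : g ∈ Subgroup.closure {c, d} := closure_c_d ▸ Subgroup.mem_top g
  induction hg using Subgroup.closure_induction_left with
  | one => exact ⟨0, 0, by simp⟩
  | mul_left x hx y _ ih =>
    obtain ⟨i, j, rfl⟩ := ih
    rcases hx with rfl | rfl
    · exact ⟨i + 1, j, by group⟩
    · refine ⟨-i, j + 1, ?_⟩
      rw [← neg_neg i, ← inv_mul_zpow_mul_eq_zpow_neg d_inv_mul_c_mul_d]
      group
  | inv_mul_cancel x hx y _ ih =>
    obtain ⟨i, j, rfl⟩ := ih
    rcases hx with rfl | rfl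
    · exact ⟨i - 1, j, by group⟩
    · refine ⟨-i, j - 1, ?_⟩
      rw [← inv_mul_zpow_mul_eq_zpow_neg d_inv_mul_c_mul_d]
      group

theorem injective_of_not_isOfFinOrder {H : Type*} [Group H] (φ : BS 1 (-1) →* H)
    (hc : ¬IsOfFinOrder (φ c)) (hd : ¬IsOfFinOrder (φ d)) : Function.Injective φ := by
  rw [injective_iff_map_eq_one]
  intro g hg
  obtain ⟨i, j, rfl⟩ := exists_eq_c_zpow_mul_d_zpow g
  rw [map_mul, map_zpow, map_zpow] at hg
  set x := φ c
  set y := φ d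
  have hxy : y⁻¹ * x * y = x⁻¹ := by simpa using congrArg φ d_inv_mul_c_mul_d
  have hyj : y ^ j = x ^ (-i) := by rw [eq_inv_of_mul_eq_one_right hg, zpow_neg]
  have hi : i = 0 := by
    suffices -i = i by omega
    apply injective_zpow_iff_not_isOfFinOrder.mpr hc
    calc x ^ (-i) = y⁻¹ * y ^ j * y := by rw [← hyj]; group
      _ = x ^ i := by rw [hyj, inv_mul_zpow_mul_eq_zpow_neg hxy, neg_neg]
  subst hi
  have hj : j = 0 := injective_zpow_iff_not_isOfFinOrder.mpr hd (by simpa using hyj)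
  simp [hj]

end BS

theorem bottle_lemma
    (G : Type) [Group G] (a b : G)
    (ha : ¬ IsOfFinOrder a) (hb : ¬ IsOfFinOrder b)
    (hab : b⁻¹ * a * b = a⁻¹)
    (hball : ∀ K : Subgroup G, K.FiniteIndex → b ∈ K)
    (K : Subgroup G) (hK : K.FiniteIndex) :
    ∃ S : Subgroup G, S ≤ K ∧ Nonempty (↥S ≃* BS 1 (-1)) := by
  obtain ⟨n, hn, -, hanK⟩ := K.exists_pow_mem_of_index_ne_zero hK.index_ne_zero a
  have hrel : b⁻¹ * (a ^ n) ^ (1 : ℤ) * b = (a ^ n) ^ (-1 : ℤ) := by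
    rw [zpow_one, zpow_neg_one, ← zpow_natCast, inv_mul_zpow_mul_eq_zpow_neg hab, zpow_neg]
  have hinj := BS.injective_of_not_isOfFinOrder (BS.lift hrel)
    (by simpa [isOfFinOrder_pow, hn.ne'] using ha) (by simpa using hb)
  refine ⟨(BS.lift hrel).range, ?_, ⟨(MonoidHom.ofInjective hinj).symm⟩⟩
  rw [BS.range_lift, Subgroup.closure_le, Set.insert_subset_iff, Set.singleton_subset_iff]
  exact ⟨hanK, hball K hK⟩
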